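/- arXiv:2409.06271 — 2 statements merged into one kernel-verified Lean document; each statement's English description precedes it below -/
import Mathlib

section
/- Let A ⊆ D and suppose f(X) is integrable. If f(X) = E[f(X) | σ(X_{D∖A})] almost surely, then f(X) = f(X^{∖A}) almost surely. -/
/-!
Replace `f` by the bounded injective function `ψ = arctan ∘ f`. Conditional independence of `X`
and `X'` given `m = σ(X_{D∖A})`, together with the `m`-measurability of `ψ(X)`, gives
`E[ψ(X) ψ(X')] = E[E[ψ(X) | m]²] = E[ψ(X)²]`, while equality of the conditional laws gives
`E[ψ(X')²] = E[ψ(X)²]`. Hence `E[(ψ(X) - ψ(X'))²] = 0`, so `ψ(X) = ψ(X')` and `f(X) = f(X')`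
almost surely.
-/

open MeasureTheory ProbabilityTheory

/-- The σ-algebra `σ(X_{D∖A})` generated by the subvector of `X` indexed by `D ∖ A`. -/
def sigmaRestrict {Ω : Type*} {d : ℕ} (X : Ω → Fin d → ℝ) (A : Finset (Fin d)) :
    MeasurableSpace Ω :=
  MeasurableSpace.comap (fun ω => (fun i : {i : Fin d // i ∈ Aᶜ} => X ω i)) inferInstance

lemma sigmaRestrict_le {Ω : Type*} [mΩ : MeasurableSpace Ω] {d : ℕ} {X : Ω → Fin d → ℝ}
    (hX : Measurable X) (A : Finset (Fin d)) : sigmaRestrict X A ≤ mΩ :=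
  Measurable.comap_le <| measurable_pi_lambda _ fun i => (measurable_pi_apply i.1).comp hX

lemma ae_eq_of_integral_mul_eq_integral_sq {Ω : Type*} [MeasurableSpace Ω] {μ : Measure Ω}
    {U V : Ω → ℝ} (hU : MemLp U 2 μ) (hV : MemLp V 2 μ)
    (hUV : ∫ ω, U ω * V ω ∂μ = ∫ ω, U ω ^ 2 ∂μ) (hVV : ∫ ω, V ω ^ 2 ∂μ = ∫ ω, U ω ^ 2 ∂μ) :
    U =ᵐ[μ] V := by
  have hU2 := hU.integrable_sq
  have hV2 := hV.integrable_sq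
  have hUV2 : Integrable (fun ω => 2 * (U ω * V ω)) μ := (hU.integrable_mul hV).const_mul 2
  have hU2UV : Integrable (fun ω => U ω ^ 2 - 2 * (U ω * V ω)) μ := hU2.sub hUV2
  have hexpand : (fun ω => (U ω - V ω) ^ 2) = fun ω => U ω ^ 2 - 2 * (U ω * V ω) + V ω ^ 2 := by
    funext ω; ring
  have hint : Integrable (fun ω => (U ω - V ω) ^ 2) μ := by
    rw [hexpand]; exact hU2UV.add hV2
  have hzero : ∫ ω, (U ω - V ω) ^ 2 ∂μ = 0 := by
    rw [hexpand, integral_add hU2UV hV2, integral_sub hU2 hUV2, integral_const_mul, hUV, hVV]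
    ring
  filter_upwards [(integral_eq_zero_iff_of_nonneg (fun ω => sq_nonneg _) hint).mp hzero]
    with ω hω
  exact sub_eq_zero.mp (pow_eq_zero_iff two_ne_zero |>.mp hω)

section CondIIDCopy

variable {Ω E : Type*} [MeasurableSpace E] {m mΩ : MeasurableSpace Ω} {μ : Measure Ω}
  [IsFiniteMeasure μ] {Y Y' : Ω → E}

/-- The product formula encodes both the conditional independence of `Y` and `Y'` given `m` and
the equality of their conditional laws (take `φ = 1`). -/
def IsCondIIDCopy (μ : Measure Ω) (m : MeasurableSpace Ω) (Y Y' : Ω → E) : Prop :=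
  ∀ φ φ' : E → ℝ, Measurable φ → Measurable φ' →
    (∃ C, ∀ x, |φ x| ≤ C) → (∃ C, ∀ x, |φ' x| ≤ C) →
    μ[(fun ω => φ (Y ω) * φ' (Y' ω)) | m]
      =ᵐ[μ] fun ω => (μ[(fun ω => φ (Y ω)) | m]) ω * (μ[(fun ω => φ' (Y ω)) | m]) ω

lemma IsCondIIDCopy.integral_comp_eq (hY : IsCondIIDCopy μ m Y Y') (hm : m ≤ mΩ)
    {φ : E → ℝ} (hφ : Measurable φ) (hφb : ∃ C, ∀ x, |φ x| ≤ C) :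
    ∫ ω, φ (Y' ω) ∂μ = ∫ ω, φ (Y ω) ∂μ := by
  have hone : μ[(fun _ => (1 : ℝ)) | m] = fun _ => 1 := condExp_const hm 1
  calc ∫ ω, φ (Y' ω) ∂μ = ∫ ω, 1 * φ (Y' ω) ∂μ := by simp only [one_mul]
    _ = ∫ ω, (μ[(fun ω => 1 * φ (Y' ω)) | m]) ω ∂μ := (integral_condExp hm).symm
    _ = ∫ ω, (μ[(fun _ => (1 : ℝ)) | m]) ω * (μ[(fun ω => φ (Y ω)) | m]) ω ∂μ :=
      integral_congr_ae (hY (fun _ => 1) φ measurable_const hφ ⟨1, fun _ => by simp⟩ hφb)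
    _ = ∫ ω, φ (Y ω) ∂μ := by simp only [hone, one_mul, integral_condExp hm]

lemma IsCondIIDCopy.integral_comp_mul_comp_eq (hY : IsCondIIDCopy μ m Y Y') (hm : m ≤ mΩ)
    {φ : E → ℝ} (hφ : Measurable φ) (hφb : ∃ C, ∀ x, |φ x| ≤ C)
    (hφY : AEStronglyMeasurable[m] (fun ω => φ (Y ω)) μ) :
    ∫ ω, φ (Y ω) * φ (Y' ω) ∂μ = ∫ ω, φ (Y ω) ^ 2 ∂μ := by
  obtain ⟨C, hC⟩ := hφb
  have hint : Integrable (fun ω => φ (Y ω)) μ :=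
    .of_bound (hφY.mono hm) C (ae_of_all _ fun ω => hC _)
  have hce : μ[(fun ω => φ (Y ω)) | m] =ᵐ[μ] fun ω => φ (Y ω) :=
    condExp_of_aestronglyMeasurable' hm hφY hint
  calc ∫ ω, φ (Y ω) * φ (Y' ω) ∂μ
      = ∫ ω, (μ[(fun ω => φ (Y ω) * φ (Y' ω)) | m]) ω ∂μ := (integral_condExp hm).symm
    _ = ∫ ω, (μ[(fun ω => φ (Y ω)) | m]) ω * (μ[(fun ω => φ (Y ω)) | m]) ω ∂μ :=
      integral_congr_ae (hY φ φ hφ hφ ⟨C, hC⟩ ⟨C, hC⟩)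
    _ = ∫ ω, φ (Y ω) ^ 2 ∂μ := by
      refine integral_congr_ae ?_
      filter_upwards [hce] with ω hω
      rw [hω, sq]

theorem IsCondIIDCopy.comp_ae_eq (hY : IsCondIIDCopy μ m Y Y') (hm : m ≤ mΩ)
    (hY' : Measurable Y') {φ : E → ℝ} (hφ : Measurable φ) (hφb : ∃ C, ∀ x, |φ x| ≤ C)
    (hφY : AEStronglyMeasurable[m] (fun ω => φ (Y ω)) μ) :
    (fun ω => φ (Y ω)) =ᵐ[μ] fun ω => φ (Y' ω) := by
  obtain ⟨C, hC⟩ := hφb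
  have hsq : ∃ C, ∀ x, |φ x ^ 2| ≤ C :=
    ⟨C ^ 2, fun x => by rw [abs_pow]; exact pow_le_pow_left₀ (abs_nonneg _) (hC x) 2⟩
  refine ae_eq_of_integral_mul_eq_integral_sq
    (.of_bound (hφY.mono hm) C (ae_of_all _ fun ω => hC _))
    (.of_bound (hφ.comp hY').aestronglyMeasurable C (ae_of_all _ fun ω => hC _))
    (hY.integral_comp_mul_comp_eq hm hφ ⟨C, hC⟩ hφY)
    (hY.integral_comp_eq hm (hφ.pow_const 2) hsq)

end CondIIDCopy

theorem stmt1_general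
    {Ω : Type*} [MeasurableSpace Ω] (μ : Measure Ω) [IsProbabilityMeasure μ]
    {d : ℕ} (X : Ω → Fin d → ℝ) (hX : Measurable X)
    (f : (Fin d → ℝ) → ℝ) (hf : Measurable f)
    (A : Finset (Fin d)) (X' : Ω → (Fin d → ℝ)) (hX' : Measurable X')
    -- (a) `X` and `X'` are conditionally i.i.d. given `σ(X_{D∖A})`
    (hiid : ∀ (φ φ' : (Fin d → ℝ) → ℝ),
      Measurable φ → Measurable φ' →
      (∃ C, ∀ x, |φ x| ≤ C) → (∃ C, ∀ x, |φ' x| ≤ C) →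
      μ[(fun ω => φ (X ω) * φ' (X' ω)) | sigmaRestrict X A]
        =ᵐ[μ] fun ω => (μ[(fun ω => φ (X ω)) | sigmaRestrict X A]) ω *
                        (μ[(fun ω => φ' (X ω)) | sigmaRestrict X A]) ω)
    -- hypothesis: `f(X) = E[f(X) | σ(X_{D∖A})]` a.s.
    (h : (fun ω => f (X ω)) =ᵐ[μ] μ[(fun ω => f (X ω)) | sigmaRestrict X A]) :
    (fun ω => f (X ω)) =ᵐ[μ] fun ω => f (X' ω) := by
  have hψb : ∃ C, ∀ x, |Real.arctan (f x)| ≤ C :=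
    ⟨Real.pi / 2, fun x => abs_le.mpr
      ⟨(Real.neg_pi_div_two_lt_arctan _).le, (Real.arctan_lt_pi_div_two _).le⟩⟩
  have hψX : AEStronglyMeasurable[sigmaRestrict X A] (fun ω => Real.arctan (f (X ω))) μ :=
    ⟨_, Real.continuous_arctan.comp_stronglyMeasurable stronglyMeasurable_condExp,
      h.fun_comp Real.arctan⟩
  filter_upwards [IsCondIIDCopy.comp_ae_eq hiid (sigmaRestrict_le hX A) hX'
    (Real.measurable_arctan.comp hf) hψb hψX] with ω hω
  exact Real.arctan_injective hω

/-- If `f(X) = E[f(X) | σ(X_{D∖A})]` almost surely, then `f(X) = f(X^{∖A})` almost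
surely.  Here `X'` plays the role of `X^{∖A}`: it agrees with `X` on the coordinates
in `D∖A` almost surely, and `X` and `X'` are conditionally i.i.d. given `σ(X_{D∖A})`
(expressed by the product formula for conditional expectations of bounded measurable
functions of `X` and `X'`). -/
theorem stmt1
    {Ω : Type*} [MeasurableSpace Ω] (μ : Measure Ω) [IsProbabilityMeasure μ]
    {d : ℕ} (X : Ω → Fin d → ℝ) (hX : Measurable X)
    (f : (Fin d → ℝ) → ℝ) (hf : Measurable f)
    (A : Finset (Fin d)) (X' : Ω → (Fin d → ℝ)) (hX' : Measurable X')
    -- (a) `X` and `X'` are conditionally i.i.d. given `σ(X_{D∖A})`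
    (hiid : ∀ (φ φ' : (Fin d → ℝ) → ℝ),
      Measurable φ → Measurable φ' →
      (∃ C, ∀ x, |φ x| ≤ C) → (∃ C, ∀ x, |φ' x| ≤ C) →
      μ[(fun ω => φ (X ω) * φ' (X' ω)) | sigmaRestrict X A]
        =ᵐ[μ] fun ω => (μ[(fun ω => φ (X ω)) | sigmaRestrict X A]) ω *
                        (μ[(fun ω => φ' (X ω)) | sigmaRestrict X A]) ω)
    -- (b) `X'` agrees with `X` on the coordinates outside `A`, almost surely
    (hfix : ∀ᵐ ω ∂μ, ∀ i ∉ A, X' ω i = X ω i)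
    -- integrability of `f(X)`
    (hfint : Integrable (fun ω => f (X ω)) μ)
    -- hypothesis: `f(X) = E[f(X) | σ(X_{D∖A})]` a.s.
    (h : (fun ω => f (X ω)) =ᵐ[μ] μ[(fun ω => f (X ω)) | sigmaRestrict X A]) :
    (fun ω => f (X ω)) =ᵐ[μ] fun ω => f (X' ω) :=
  stmt1_general μ X hX f hf A X' hX' hiid h
end

section
/- Let A ⊆ D and suppose f(X) is square-integrable. Then E[(f(X) − f(X^{∖A}))²]/2 = E[(f(X) − E[f(X) | σ(X_{D∖A})])²], i.e., the expected halved squared difference between f(X) and f(X^{∖A}) equals the expectation of the conditional variance of f(X) given X_{D∖A}. -/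
/-!
Write `m = σ(X_{D∖A})` and `Y = f(X)`. Integrating the conditional product formula gives
`E[φ(X) φ(X')] = E[E[φ(X) | m]²]` for bounded `φ`; applied to the truncations of `f` and passed to
the limit (conditional expectation is continuous on `L²`) it gives `E[f(X) f(X')] = E[E[Y | m]²]`.
Taking `φ = 1` in the product formula shows that `X'` has the law of `X`, so expanding the square,
`E[(f(X) - f(X'))²] / 2 = E[Y²] - E[E[Y | m]²] = E[(Y - E[Y | m])²]`.
-/

open MeasureTheory ProbabilityTheory Filter Topology

section L2

variable {Ω : Type*} {m m₀ : MeasurableSpace Ω} {μ : Measure Ω} {Y : Ω → ℝ}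

theorem MeasureTheory.MemLp.integral_sq_eq_norm_toLp_sq (hY : MemLp Y 2 μ) :
    ∫ ω, Y ω ^ 2 ∂μ = ‖hY.toLp Y‖ ^ 2 := by
  rw [← real_inner_self_eq_norm_sq, L2.inner_def]
  refine integral_congr_ae ?_
  filter_upwards [hY.coeFn_toLp] with ω hω
  simp [hω, sq]

theorem MeasureTheory.MemLp.integral_sq_condExp_eq_norm_condExpL2_sq (hm : m ≤ m₀)
    [IsFiniteMeasure μ] (hY : MemLp Y 2 μ) :
    ∫ ω, (μ[Y | m]) ω ^ 2 ∂μ = ‖(condExpL2 ℝ ℝ hm hY.toLp : Lp ℝ 2 μ)‖ ^ 2 := by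
  rw [(hY.condExp one_le_two).integral_sq_eq_norm_toLp_sq]
  congr 2
  exact Lp.ext_iff.2 ((hY.condExp one_le_two).coeFn_toLp.trans
    (hY.condExpL2_ae_eq_condExp hm).symm)

theorem tendsto_integral_sq_condExp (hm : m ≤ m₀) [IsFiniteMeasure μ] {Z : ℕ → Ω → ℝ}
    (hZ : ∀ n, MemLp (Z n) 2 μ) (hY : MemLp Y 2 μ)
    (h : Tendsto (fun n => ∫ ω, (Z n ω - Y ω) ^ 2 ∂μ) atTop (𝓝 0)) :
    Tendsto (fun n => ∫ ω, (μ[Z n | m]) ω ^ 2 ∂μ) atTop (𝓝 (∫ ω, (μ[Y | m]) ω ^ 2 ∂μ)) := by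
  have hLp : Tendsto (fun n => (hZ n).toLp (Z n)) atTop (𝓝 (hY.toLp Y)) := by
    have hdist (n : ℕ) : ∫ ω, (Z n ω - Y ω) ^ 2 ∂μ = ‖(hZ n).toLp (Z n) - hY.toLp Y‖ ^ 2 := by
      rw [← MemLp.toLp_sub, ← ((hZ n).sub hY).integral_sq_eq_norm_toLp_sq]
      rfl
    rw [tendsto_iff_norm_sub_tendsto_zero]
    simpa [hdist, Real.sqrt_sq (norm_nonneg _)] using h.sqrt
  simp only [MemLp.integral_sq_condExp_eq_norm_condExpL2_sq hm (hZ _),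
    hY.integral_sq_condExp_eq_norm_condExpL2_sq hm]
  exact ((continuous_norm.comp (continuous_subtype_val.comp
    (condExpL2 ℝ ℝ hm).continuous)).pow 2).continuousAt.tendsto.comp hLp

theorem integral_sub_sq_eq {Y' : Ω → ℝ} (hY : MemLp Y 2 μ) (hY' : MemLp Y' 2 μ) :
    ∫ ω, (Y ω - Y' ω) ^ 2 ∂μ
      = ∫ ω, Y ω ^ 2 ∂μ - 2 * ∫ ω, Y ω * Y' ω ∂μ + ∫ ω, Y' ω ^ 2 ∂μ := by
  have hYY' : Integrable (fun ω => 2 * (Y ω * Y' ω)) μ := (hY.integrable_mul hY').const_mul 2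
  have hdiff : Integrable (fun ω => Y ω ^ 2 - 2 * (Y ω * Y' ω)) μ := hY.integrable_sq.sub hYY'
  simp_rw [sub_sq, mul_assoc]
  rw [integral_add hdiff hY'.integrable_sq, integral_sub hY.integrable_sq hYY', integral_const_mul]

theorem integral_sq_sub_condExp (hm : m ≤ m₀) [IsFiniteMeasure μ] (hY : MemLp Y 2 μ) :
    ∫ ω, (Y ω - (μ[Y | m]) ω) ^ 2 ∂μ = ∫ ω, Y ω ^ 2 ∂μ - ∫ ω, (μ[Y | m]) ω ^ 2 ∂μ := by
  calc ∫ ω, (Y ω - (μ[Y | m]) ω) ^ 2 ∂μ = ∫ ω, Var[Y; μ | m] ω ∂μ := (integral_condExp hm).symm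
    _ = ∫ ω, ((μ[Y ^ 2 | m]) ω - (μ[Y | m]) ω ^ 2) ∂μ :=
      integral_congr_ae (condVar_ae_eq_condExp_sq_sub_sq_condExp hm hY)
    _ = _ := by
      rw [integral_sub integrable_condExp (hY.condExp one_le_two).integrable_sq,
        integral_condExp hm]
      rfl

end L2

section Truncation

theorem tendsto_truncation {α : Type*} (f : α → ℝ) (x : α) :
    Tendsto (fun n : ℕ => truncation f n x) atTop (𝓝 (f x)) :=
  tendsto_atTop_of_eventually_const (i₀ := ⌈|f x|⌉₊ + 1) fun n hn =>
    truncation_eq_self ((Nat.le_ceil _).trans_lt (by exact_mod_cast Nat.lt_of_succ_le hn))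

variable {Ω : Type*} [MeasurableSpace Ω] {μ : Measure Ω} {Y Y' : Ω → ℝ}

theorem tendsto_integral_sq_truncation_sub (hY : MemLp Y 2 μ) :
    Tendsto (fun n : ℕ => ∫ ω, (truncation Y n ω - Y ω) ^ 2 ∂μ) atTop (𝓝 0) := by
  have hlim : ∀ ω, Tendsto (fun n : ℕ => (truncation Y n ω - Y ω) ^ 2) atTop (𝓝 0) := fun ω => by
    simpa using ((tendsto_truncation Y ω).sub_const (Y ω)).pow 2
  -- `truncation Y n - Y` is either `0` or `-Y`
  have hbound (n : ℕ) (ω : Ω) : ‖(truncation Y n ω - Y ω) ^ 2‖ ≤ Y ω ^ 2 := by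
    simp only [truncation, Set.indicator, Function.comp_apply, id]
    split_ifs <;> simp [sq_nonneg]
  simpa using tendsto_integral_of_dominated_convergence (fun ω => Y ω ^ 2)
    (fun n => ((hY.1.truncation.sub hY.1).pow 2)) hY.integrable_sq
    (fun n => ae_of_all μ (hbound n)) (ae_of_all μ hlim)

theorem tendsto_integral_truncation_mul_truncation (hY : AEStronglyMeasurable Y μ)
    (hY' : AEStronglyMeasurable Y' μ) (hYY' : Integrable (Y * Y') μ) :
    Tendsto (fun n : ℕ => ∫ ω, truncation Y n ω * truncation Y' n ω ∂μ) atTop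
      (𝓝 (∫ ω, Y ω * Y' ω ∂μ)) := by
  refine tendsto_integral_of_dominated_convergence (fun ω => |Y ω * Y' ω|)
    (fun n => hY.truncation.mul hY'.truncation) hYY'.abs (fun n => ae_of_all μ fun ω => ?_)
    (ae_of_all μ fun ω => (tendsto_truncation Y ω).mul (tendsto_truncation Y' ω))
  rw [Real.norm_eq_abs, abs_mul, abs_mul]
  exact mul_le_mul (abs_truncation_le_abs_self _ _ _) (abs_truncation_le_abs_self _ _ _)
    (abs_nonneg _) (abs_nonneg _)

end Truncation

/-- Conditional independence of `X` and `X'` given `m` together with equality of their conditional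
laws, tested on bounded measurable functions. -/
def IsCondIndepCopy {Ω E : Type*} {m₀ : MeasurableSpace Ω} [MeasurableSpace E]
    (m : MeasurableSpace Ω) (μ : Measure[m₀] Ω) (X X' : Ω → E) : Prop :=
  ∀ (φ φ' : E → ℝ), Measurable φ → Measurable φ' →
    (∃ C, ∀ x, |φ x| ≤ C) → (∃ C, ∀ x, |φ' x| ≤ C) →
    μ[(fun ω => φ (X ω) * φ' (X' ω)) | m]
      =ᵐ[μ] fun ω => (μ[(fun ω => φ (X ω)) | m]) ω * (μ[(fun ω => φ' (X ω)) | m]) ω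

namespace IsCondIndepCopy

variable {Ω E : Type*} [MeasurableSpace E] {m m₀ : MeasurableSpace Ω} {μ : Measure Ω}
  [IsFiniteMeasure μ] {X X' : Ω → E}

theorem integral_mul (h : IsCondIndepCopy m μ X X') (hm : m ≤ m₀) {φ φ' : E → ℝ}
    (hφ : Measurable φ) (hφ' : Measurable φ') (hφb : ∃ C, ∀ x, |φ x| ≤ C)
    (hφ'b : ∃ C, ∀ x, |φ' x| ≤ C) :
    ∫ ω, φ (X ω) * φ' (X' ω) ∂μ
      = ∫ ω, (μ[(fun ω => φ (X ω)) | m]) ω * (μ[(fun ω => φ' (X ω)) | m]) ω ∂μ :=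
  (integral_condExp hm).symm.trans (integral_congr_ae (h φ φ' hφ hφ' hφb hφ'b))

theorem identDistrib (h : IsCondIndepCopy m μ X X') (hm : m ≤ m₀) (hX : Measurable X)
    (hX' : Measurable X') : IdentDistrib X' X μ μ := by
  refine ⟨hX'.aemeasurable, hX.aemeasurable, Measure.ext fun s hs => ?_⟩
  have hint := h.integral_mul hm (φ := fun _ => 1) (φ' := s.indicator 1) measurable_const
    (measurable_one.indicator hs) ⟨1, fun _ => by simp⟩
    ⟨1, fun x => by by_cases hx : x ∈ s <;> simp [hx]⟩
  simp only [one_mul, condExp_const hm, integral_condExp hm] at hint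
  have hreal {Z : Ω → E} (hZ : Measurable Z) :
      ∫ ω, s.indicator 1 (Z ω) ∂μ = (μ.map Z).real s := by
    rw [map_measureReal_apply hZ hs, ← integral_indicator_one (hZ hs)]
    rfl
  rw [hreal hX', hreal hX] at hint
  exact (measureReal_eq_measureReal_iff (measure_ne_top _ _) (measure_ne_top _ _)).1 hint

theorem integral_mul_eq_integral_sq_condExp (h : IsCondIndepCopy m μ X X') (hm : m ≤ m₀)
    (hX : Measurable X) (hX' : Measurable X') {f : E → ℝ} (hf : Measurable f)
    (hfX : MemLp (fun ω => f (X ω)) 2 μ) :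
    ∫ ω, f (X ω) * f (X' ω) ∂μ = ∫ ω, (μ[(fun ω => f (X ω)) | m]) ω ^ 2 ∂μ := by
  have hfX' : MemLp (fun ω => f (X' ω)) 2 μ :=
    ((h.identDistrib hm hX hX').comp hf).memLp_iff.2 hfX
  have htrunc (n : ℕ) : ∫ ω, truncation f n (X ω) * truncation f n (X' ω) ∂μ
      = ∫ ω, (μ[(fun ω => truncation f n (X ω)) | m]) ω ^ 2 ∂μ := by
    have hφ : Measurable (truncation f n) := (measurable_id.indicator measurableSet_Ioc).comp hf
    simp only [h.integral_mul hm hφ hφ ⟨_, abs_truncation_le_bound f n⟩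
      ⟨_, abs_truncation_le_bound f n⟩, sq]
  refine tendsto_nhds_unique ((tendsto_integral_truncation_mul_truncation hfX.1 hfX'.1
    (hfX.integrable_mul hfX')).congr htrunc) ?_
  exact tendsto_integral_sq_condExp hm (fun n => hfX.1.memLp_truncation) hfX
    (tendsto_integral_sq_truncation_sub hfX)

end IsCondIndepCopy

theorem stmt3_general
    {Ω : Type*} [MeasurableSpace Ω] (μ : Measure Ω) [IsProbabilityMeasure μ]
    {d : ℕ} (X : Ω → Fin d → ℝ) (hX : Measurable X)
    (f : (Fin d → ℝ) → ℝ) (hf : Measurable f)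
    (A : Finset (Fin d)) (X' : Ω → (Fin d → ℝ)) (hX' : Measurable X')
    -- (a) `X` and `X'` are conditionally i.i.d. given `σ(X_{D∖A})`
    (hiid : ∀ (φ φ' : (Fin d → ℝ) → ℝ),
      Measurable φ → Measurable φ' →
      (∃ C, ∀ x, |φ x| ≤ C) → (∃ C, ∀ x, |φ' x| ≤ C) →
      μ[(fun ω => φ (X ω) * φ' (X' ω)) | sigmaRestrict X A]
        =ᵐ[μ] fun ω => (μ[(fun ω => φ (X ω)) | sigmaRestrict X A]) ω *
                        (μ[(fun ω => φ' (X ω)) | sigmaRestrict X A]) ω)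
    -- square-integrability of `f(X)`
    (hfL2 : MemLp (fun ω => f (X ω)) 2 μ) :
    (∫ ω, (f (X ω) - f (X' ω)) ^ 2 ∂μ) / 2
      = ∫ ω, (f (X ω) - (μ[(fun ω => f (X ω)) | sigmaRestrict X A]) ω) ^ 2 ∂μ := by
  have hm : sigmaRestrict X A ≤ ‹MeasurableSpace Ω› :=
    Measurable.comap_le (measurable_pi_lambda _ fun i => (measurable_pi_apply (i : Fin d)).comp hX)
  have hcopy : IsCondIndepCopy (sigmaRestrict X A) μ X X' := hiid
  have hid := (hcopy.identDistrib hm hX hX').comp hf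
  have hfX' : MemLp (fun ω => f (X' ω)) 2 μ := hid.memLp_iff.2 hfL2
  have hsq : ∫ ω, f (X' ω) ^ 2 ∂μ = ∫ ω, f (X ω) ^ 2 ∂μ :=
    (hid.comp (measurable_id.pow_const 2)).integral_eq
  rw [integral_sub_sq_eq hfL2 hfX', hsq,
    hcopy.integral_mul_eq_integral_sq_condExp hm hX hX' hf hfL2, integral_sq_sub_condExp hm hfL2]
  ring

/-- Example 1: if `f(X)` is square-integrable then
`E[(f(X) − f(X^{∖A}))²]/2 = E[(f(X) − E[f(X) | σ(X_{D∖A})])²]`, i.e. the expected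
halved squared difference equals the expected conditional variance of `f(X)`
given `X_{D∖A}`.  Here `X'` plays the role of `X^{∖A}`: it agrees with `X` on the coordinates
in `D∖A` almost surely, and `X` and `X'` are conditionally i.i.d. given `σ(X_{D∖A})`
(expressed by the product formula for conditional expectations of bounded measurable
functions of `X` and `X'`). -/
theorem stmt3
    {Ω : Type*} [MeasurableSpace Ω] (μ : Measure Ω) [IsProbabilityMeasure μ]
    {d : ℕ} (X : Ω → Fin d → ℝ) (hX : Measurable X)
    (f : (Fin d → ℝ) → ℝ) (hf : Measurable f)
    (A : Finset (Fin d)) (X' : Ω → (Fin d → ℝ)) (hX' : Measurable X')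
    -- (a) `X` and `X'` are conditionally i.i.d. given `σ(X_{D∖A})`
    (hiid : ∀ (φ φ' : (Fin d → ℝ) → ℝ),
      Measurable φ → Measurable φ' →
      (∃ C, ∀ x, |φ x| ≤ C) → (∃ C, ∀ x, |φ' x| ≤ C) →
      μ[(fun ω => φ (X ω) * φ' (X' ω)) | sigmaRestrict X A]
        =ᵐ[μ] fun ω => (μ[(fun ω => φ (X ω)) | sigmaRestrict X A]) ω *
                        (μ[(fun ω => φ' (X ω)) | sigmaRestrict X A]) ω)
    -- (b) `X'` agrees with `X` on the coordinates outside `A`, almost surely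
    (hfix : ∀ᵐ ω ∂μ, ∀ i ∉ A, X' ω i = X ω i)
    -- square-integrability of `f(X)`
    (hfL2 : MemLp (fun ω => f (X ω)) 2 μ) :
    (∫ ω, (f (X ω) - f (X' ω)) ^ 2 ∂μ) / 2
      = ∫ ω, (f (X ω) - (μ[(fun ω => f (X ω)) | sigmaRestrict X A]) ω) ^ 2 ∂μ :=
  stmt3_general μ X hX f hf A X' hX' hiid hfL2
end
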